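/- Let g ≥ 2. The set S_g of stable graphs of genus g, partially ordered by edge-contraction, is a graded poset with rank function G ↦ 3g − 3 − |E(G)|. -/

import Mathlib

/-!
Common framework: finite vertex-weighted multigraphs (loops and multiple edges
allowed), generalized orientations, divisors, contractions, and poset gadgets.

A graph is encoded by a finite set `V ⊆ ℕ` of vertices, a finite set `E ⊆ ℕ`
of edges, an "ends" function assigning to each edge its ordered pair of
end-vertices (the two components encode the two half-edges), and a weight
function `w : ℕ → ℕ`.

A generalized orientation is a function `ℕ → Option EdgeDir`, where `none`
means the edge is absent (an orientation on a spanning subgraph `G − S` takes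
the value `none` exactly on edges outside `E \ S`), `fwd`/`bwd` give the edge a
single direction, and `bi` makes the edge bioriented.
-/

open scoped Classical
open Finset

/-- Direction of an edge under a generalized orientation. -/
inductive EdgeDir : Type
  | fwd
  | bwd
  | bi
deriving DecidableEq

/-- Generalized orientation data. -/
abbrev Orient : Type := ℕ → Option EdgeDir

/-- The number of ending (target) half-edges at the vertex `v` of an edge with
end-pair `p`, given its direction `d`.  A one-way oriented edge has exactly
one target end; a bioriented edge has both ends as targets. -/
def dirT : Option EdgeDir → ℕ × ℕ → ℕ → ℕ
  | none, _, _ => 0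
  | some EdgeDir.fwd, p, v => if p.2 = v then 1 else 0
  | some EdgeDir.bwd, p, v => if p.1 = v then 1 else 0
  | some EdgeDir.bi, p, v => (if p.1 = v then 1 else 0) + (if p.2 = v then 1 else 0)

/-- Restriction of orientation data to the set `D` of kept edges. -/
def restr (O : Orient) (D : Finset ℕ) : Orient := fun e => if e ∈ D then O e else none

/-- A finite vertex-weighted multigraph. -/
structure WGraph : Type where
  V : Finset ℕ
  E : Finset ℕ
  ends : ℕ → ℕ × ℕ
  w : ℕ → ℕ
  ends_mem : ∀ e ∈ E, (ends e).1 ∈ V ∧ (ends e).2 ∈ V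

namespace WGraph

variable (G : WGraph)

/-- Edge set of the induced subgraph `(G−S)[Z]`: edges of `G − S` with both
ends in `Z`. -/
def indEdges (S Z : Finset ℕ) : Finset ℕ :=
  (G.E \ S).filter fun e => (G.ends e).1 ∈ Z ∧ (G.ends e).2 ∈ Z

/-- The cut `E(Z, Zᶜ)` in `G − S`: edges of `G − S` with exactly one end in `Z`. -/
def cutEdges (S Z : Finset ℕ) : Finset ℕ :=
  (G.E \ S).filter fun e =>
    ((G.ends e).1 ∈ Z ∧ (G.ends e).2 ∉ Z) ∨ ((G.ends e).1 ∉ Z ∧ (G.ends e).2 ∈ Z)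

/-- Adjacency via an edge belonging to `F ∩ E`. -/
def adjOn (F : Finset ℕ) (u v : ℕ) : Prop :=
  ∃ e ∈ F ∩ G.E, G.ends e = (u, v) ∨ G.ends e = (v, u)

/-- Number of connected components of the subgraph with vertex set `W` and
edge set `F`. -/
noncomputable def ncomp (W F : Finset ℕ) : ℕ :=
  Nat.card (Quot (fun u v : {x : ℕ // x ∈ W} => G.adjOn F u.1 v.1))

/-- The subgraph with vertex set `W` and edge set `F` is connected. -/
def ConnSub (W F : Finset ℕ) : Prop := G.ncomp W F = 1

/-- `G` is connected. -/
def Connected : Prop := G.ConnSub G.V G.E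

/-- Genus of the subgraph with vertex set `W` and edge set `F`:
`∑_{v ∈ W} w(v) − |W| + |F| + c`. -/
noncomputable def subGenus (W F : Finset ℕ) : ℤ :=
  (∑ v ∈ W, (G.w v : ℤ)) - (W.card : ℤ) + (((F ∩ G.E).card : ℤ)) + (G.ncomp W F : ℤ)

/-- The genus of `G`. -/
noncomputable def genus : ℤ := G.subGenus G.V G.E

/-- The degree of a vertex: the number of half-edges having `v` as end. -/
def deg (v : ℕ) : ℕ :=
  ∑ e ∈ G.E, ((if (G.ends e).1 = v then 1 else 0) + (if (G.ends e).2 = v then 1 else 0))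

/-- `e` is a bridge of `G − S`: removing it increases the number of connected
components. -/
def IsBridge (S : Finset ℕ) (e : ℕ) : Prop :=
  e ∈ G.E \ S ∧ G.ncomp G.V (G.E \ S) < G.ncomp G.V (G.E \ insert e S)

/-- The set of bridges of `G − S`. -/
noncomputable def bridges (S : Finset ℕ) : Finset ℕ := (G.E \ S).filter (G.IsBridge S)

/-- `T` is a cut of `G`, i.e. `T = E(Z, Zᶜ)` for some `∅ ⊊ Z ⊊ V`. -/
def IsCut (T : Finset ℕ) : Prop :=
  ∃ Z, Z ⊆ G.V ∧ Z.Nonempty ∧ Z ≠ G.V ∧ T = G.cutEdges ∅ Z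

/-- `W` is (the vertex set of) a connected component of `G − S`. -/
def IsCompOf (S W : Finset ℕ) : Prop :=
  W ⊆ G.V ∧ W.Nonempty ∧ G.ConnSub W (G.indEdges S W) ∧ G.cutEdges S W = ∅

/-- The poset `A^b_G`: for `b = 0` the sets `S ⊆ E` with `G − S` bridgeless,
for `b = 1` the sets `S ⊆ E` with `G − S` connected. -/
def Ab (b : ℕ) (S : Finset ℕ) : Prop :=
  S ⊆ G.E ∧ ((b = 0 ∧ ∀ e, ¬ G.IsBridge S e) ∨ (b = 1 ∧ G.ConnSub G.V (G.E \ S)))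

/-- `G` is a stable graph of genus `g`: connected, of genus `g`, and every
vertex of weight `0` has degree at least `3`. -/
noncomputable def Stable (g : ℕ) : Prop :=
  G.Connected ∧ G.genus = (g : ℤ) ∧ ∀ v ∈ G.V, G.w v = 0 → 3 ≤ G.deg v

/-! ### Generalized orientations on spanning subgraphs -/

/-- `O` is orientation data for the spanning subgraph `G − S` (it is defined
exactly on the edges of `G − S`). -/
def IsOrientOn (S : Finset ℕ) (O : Orient) : Prop :=
  ∀ e, O e ≠ none ↔ e ∈ G.E \ S

/-- The set of bioriented edges of `O`. -/
def biE (O : Orient) : Finset ℕ := G.E.filter fun e => O e = some EdgeDir.bi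

/-- `t^O_v`: the number of half-edges having `v` as target. -/
def tOr (O : Orient) (v : ℕ) : ℕ := ∑ e ∈ G.E, dirT (O e) (G.ends e) v

/-- `t^O(Z)`: the number of edges of `G − S` not contained in `(G−S)[Z]`
having a target in `Z`. -/
def tCut (S : Finset ℕ) (O : Orient) (Z : Finset ℕ) : ℕ :=
  ∑ e ∈ (G.E \ S) \ G.indEdges S Z, ∑ v ∈ Z, dirT (O e) (G.ends e) v

/-- The divisor `d^O` of a `b`-orientation `O` on `G − S`:
`d^O_v = w(v) − 1 + t^O_v` if `G − S` has edges, and `d^O_v = w(v) − 1 + b`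
otherwise; it is supported on `V`. -/
noncomputable def divOr (S : Finset ℕ) (b : ℕ) (O : Orient) : ℕ → ℤ :=
  fun v => if v ∈ G.V then
      (if G.E \ S = ∅ then (G.w v : ℤ) - 1 + (b : ℤ) else (G.w v : ℤ) - 1 + (G.tOr O v : ℤ))
    else 0

/-- Equivalence of generalized orientations on `G − S`:  both are orientations
on `G − S` and they have the same divisor. -/
noncomputable def equivOr (S : Finset ℕ) (b : ℕ) (O O' : Orient) : Prop :=
  G.IsOrientOn S O ∧ G.IsOrientOn S O' ∧ G.divOr S b O = G.divOr S b O'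

/-- `O` is a totally cyclic orientation on `G − S`: every nonempty cut
`E(Z,Zᶜ)` contains an edge with target in `Z` and an edge with target in `Zᶜ`. -/
def TotCyc (S : Finset ℕ) (O : Orient) : Prop :=
  ∀ Z : Finset ℕ, Z ⊆ G.V → Z.Nonempty → Z ≠ G.V → (G.cutEdges S Z).Nonempty →
    (∃ e ∈ G.cutEdges S Z, ∃ v ∈ Z, 0 < dirT (O e) (G.ends e) v) ∧
    (∃ e ∈ G.cutEdges S Z, ∃ v ∈ G.V \ Z, 0 < dirT (O e) (G.ends e) v)

/-- `O` is `e₀`-rooted on `G − S`: for every `Z ⊊ V` with `e₀` an edge of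
`(G−S)[Z]`, the cut `E(Z,Zᶜ)` contains an edge with target in `Zᶜ`. -/
def RootedAt (S : Finset ℕ) (O : Orient) (e₀ : ℕ) : Prop :=
  ∀ Z : Finset ℕ, Z ⊆ G.V → Z ≠ G.V → e₀ ∈ G.indEdges S Z →
    ∃ e ∈ G.cutEdges S Z, ∃ v ∈ G.V \ Z, 0 < dirT (O e) (G.ends e) v

/-- `O` is a rooted `1`-orientation on `G − S`:  it has exactly one bioriented
edge, at which it is rooted.  By convention, if `G − S` consists of a single
vertex (and no edges), the empty orientation is rooted. -/
def Rooted1 (S : Finset ℕ) (O : Orient) : Prop :=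
  (∃ e₀, G.biE O = {e₀} ∧ G.RootedAt S O e₀) ∨ (G.E \ S = ∅ ∧ G.V.card = 1)

/-- `O ∈ 𝒪^b(G−S)`:  for `b = 0`, a totally cyclic orientation on `G − S`;
for `b = 1`, a rooted `1`-orientation on `G − S`. -/
def MemOb (S : Finset ℕ) (b : ℕ) (O : Orient) : Prop :=
  G.IsOrientOn S O ∧
    ((b = 0 ∧ G.biE O = ∅ ∧ G.TotCyc S O) ∨ (b = 1 ∧ G.Rooted1 S O))

/-- `O` is a `b`-orientation on `G − S` (exactly `b` bioriented edges; by
convention the empty orientation on a one-vertex edgeless graph counts as a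
`1`-orientation). -/
def IsbOr (S : Finset ℕ) (b : ℕ) (O : Orient) : Prop :=
  G.IsOrientOn S O ∧
    ((G.biE O).card = b ∨ (G.E \ S = ∅ ∧ G.V.card = 1 ∧ b = 1))

/-! ### Posets of orientations on spanning subgraphs -/

/-- The order of `𝒪𝒫^b_G` on pairs `(S, O_S)`:  `(S,O_S) ≤ (T,O_T)` iff
`T ⊆ S` and the restriction of `O_T` to `G − S` is `O_S`. -/
def leOP (p q : Finset ℕ × Orient) : Prop :=
  q.1 ⊆ p.1 ∧ restr q.2 (G.E \ p.1) = p.2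

/-- The order of `𝒪̄𝒫^b_G` on pairs (representing classes): `(S,O̅_S) ≤ (T,O̅_T)`
iff `T ⊆ S` and some representative of `O̅_T` restricts on `G − S` to some
representative of `O̅_S`. -/
noncomputable def leOPbar (b : ℕ) (p q : Finset ℕ × Orient) : Prop :=
  q.1 ⊆ p.1 ∧ ∃ O', G.equivOr q.1 b O' q.2 ∧
    G.equivOr p.1 b (restr O' (G.E \ p.1)) p.2

/-- Equality in `𝒪̄𝒫^b_G`: same subgraph and equivalent orientations. -/
noncomputable def eqOP (b : ℕ) (p q : Finset ℕ × Orient) : Prop :=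
  p.1 = q.1 ∧ G.equivOr p.1 b p.2 q.2

/-- Membership in `𝒪𝒫^b_G`. -/
def POb (b : ℕ) (p : Finset ℕ × Orient) : Prop :=
  G.Ab b p.1 ∧ G.MemOb p.1 b p.2

/-! ### Stable divisors -/

/-- Stable divisors on `G − S` of degree `g(G−S) − c(G−S) + b` (`b = 0, 1`):
for `b = 1`, `G − S` is connected, the degree is `g(G−S)` and
`|d_Z| > g(Z) − 1` for every `Z ⊆ V`; for `b = 0`, the restriction of `d` to
every connected component `W` of `G − S` has degree `g(W) − 1` and satisfies
`|d_Z| > g(Z) − 1` for every `∅ ≠ Z ⊊ W`. -/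
noncomputable def StableDiv (S : Finset ℕ) (b : ℕ) (d : ℕ → ℤ) : Prop :=
  (∀ v, v ∉ G.V → d v = 0) ∧
  ((b = 1 ∧ G.ConnSub G.V (G.E \ S) ∧
      (∑ v ∈ G.V, d v) = G.subGenus G.V (G.E \ S) ∧
      ∀ Z ⊆ G.V, G.subGenus Z (G.indEdges S Z) - 1 < ∑ v ∈ Z, d v) ∨
   (b = 0 ∧ ∀ W, G.IsCompOf S W →
      (∑ v ∈ W, d v) = G.subGenus W (G.indEdges S W) - 1 ∧
      ∀ Z ⊆ W, Z.Nonempty → Z ≠ W →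
        G.subGenus Z (G.indEdges S Z) - 1 < ∑ v ∈ Z, d v))

/-! ### Contractions -/

/-- The relation identifying the two ends of each edge in `S₀`. -/
def conRel (S₀ : Finset ℕ) (u v : ℕ) : Prop :=
  ∃ e ∈ S₀ ∩ G.E, G.ends e = (u, v) ∨ G.ends e = (v, u)

/-- Representative (the least element) of the class of `v` under the
equivalence generated by identifying the ends of the edges in `S₀`. -/
noncomputable def crep (S₀ : Finset ℕ) (v : ℕ) : ℕ :=
  sInf {u | Relation.EqvGen (G.conRel S₀) u v}

/-- The (weighted) edge contraction `G/S₀`: every connected component of the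
subgraph spanned by `S₀` is contracted to a single vertex, whose weight is the
genus of that component; `E(G/S₀) = E(G) \ S₀`. -/
noncomputable def contract (S₀ : Finset ℕ) : WGraph where
  V := G.V.image (G.crep S₀)
  E := G.E \ S₀
  ends := fun e => (G.crep S₀ (G.ends e).1, G.crep S₀ (G.ends e).2)
  w := fun v =>
    (G.subGenus (G.V.filter fun u => G.crep S₀ u = v)
      (G.indEdges (G.E \ S₀) (G.V.filter fun u => G.crep S₀ u = v))).toNat
  ends_mem := by
    intro e he
    rw [Finset.mem_sdiff] at he
    exact ⟨Finset.mem_image_of_mem _ (G.ends_mem e he.1).1,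
           Finset.mem_image_of_mem _ (G.ends_mem e he.1).2⟩

/-- Deletion of the edges in `T` (a spanning subgraph, as a graph). -/
def ddel (T : Finset ℕ) : WGraph where
  V := G.V
  E := G.E \ T
  ends := G.ends
  w := G.w
  ends_mem := fun e he => G.ends_mem e (Finset.mem_sdiff.mp he).1

/-- Pullback `γ* T` of an edge set along the contraction `γ : G → G/S₀`:
`T ∪ (G−T)_br` for `b = 0`, and `T` for `b = 1`. -/
noncomputable def pullStar (b : ℕ) (T : Finset ℕ) : Finset ℕ :=
  if b = 0 then T ∪ G.bridges T else T

/-- Pushforward of a divisor along the contraction `γ : G → G/S₀`: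
`(γ_* d)_v = ∑_{z ∈ γ⁻¹(v)} d_z`. -/
noncomputable def pushDiv (S₀ : Finset ℕ) (d : ℕ → ℤ) : ℕ → ℤ :=
  fun v => ∑ z ∈ G.V.filter (fun u => G.crep S₀ u = v), d z

/-- The divisor `c^{γ,S}` on `G/S₀`: `c^{γ,S}_v = #{e ∈ S₀ ∩ S : γ(e) = v}`. -/
noncomputable def cGamma (S₀ S : Finset ℕ) : ℕ → ℤ :=
  fun v => ((((S₀ ∩ S) ∩ G.E).filter (fun e => G.crep S₀ (G.ends e).1 = v)).card : ℤ)

/-- The relation "`q` is a value of `γ̄_*` at `p`" for the contraction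
`γ : G → G/S₀` acting on classes of orientations: `q` is the restriction to
`(G/S₀) − γ_* S` of a representative of the class of `p` having no bioriented
edge in `S₀` (when `(G/S₀) − γ_*S` has no edges, any representative serves). -/
noncomputable def pushRel (S₀ : Finset ℕ) (b : ℕ) (p q : Finset ℕ × Orient) : Prop :=
  ∃ O', G.equivOr p.1 b O' p.2 ∧
    ((∀ e ∈ S₀, O' e ≠ some EdgeDir.bi) ∨ G.E \ (S₀ ∪ p.1) = ∅) ∧
    q.1 = p.1 \ S₀ ∧ q.2 = restr O' (G.E \ (S₀ ∪ p.1))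

/-! ### Isomorphisms and directed reachability -/

/-- `(fV, fE)` is an isomorphism from `G` to `H`. -/
def IsoMaps (H : WGraph) (fV fE : ℕ → ℕ) : Prop :=
  Set.BijOn fV ↑G.V ↑H.V ∧ Set.BijOn fE ↑G.E ↑H.E ∧
  (∀ e ∈ G.E, H.ends (fE e) = (fV (G.ends e).1, fV (G.ends e).2) ∨
              H.ends (fE e) = (fV (G.ends e).2, fV (G.ends e).1)) ∧
  (∀ v ∈ G.V, H.w (fV v) = G.w v)

/-- `G` and `H` are isomorphic graphs. -/
def Iso (H : WGraph) : Prop := ∃ fV fE, G.IsoMaps H fV fE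

/-- The edge-contraction relation: `G ≤ H` iff `H = G/S₀` (up to isomorphism)
for some `S₀ ⊆ E(G)`. -/
noncomputable def contractLE (H : WGraph) : Prop :=
  ∃ S₀ ⊆ G.E, (G.contract S₀).Iso H

/-- One step from `u` to `v` along an `O`-directed edge (a bioriented edge may
be traversed in both directions). -/
def dirStep (O : Orient) (u v : ℕ) : Prop :=
  ∃ e ∈ G.E,
    (O e = some EdgeDir.fwd ∧ G.ends e = (u, v)) ∨
    (O e = some EdgeDir.bwd ∧ G.ends e = (v, u)) ∨
    (O e = some EdgeDir.bi ∧ (G.ends e = (u, v) ∨ G.ends e = (v, u)))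

/-- There is an `O`-directed path from the (bioriented) edge `e` to the
vertex `v`: a directed path starting at one of the ends of `e` and ending
at `v`. -/
def dirReachFromEdge (O : Orient) (e v : ℕ) : Prop :=
  ∃ u, ((G.ends e).1 = u ∨ (G.ends e).2 = u) ∧
    Relation.ReflTransGen (G.dirStep O) u v

end WGraph

/-! ### Generic poset gadgets (for sets with an order, modulo an equivalence) -/

/-- `le` is a partial order on `{a | P a}` modulo the identification `eqv`. -/
def IsPartialOrderOnMod {α : Type*} (P : α → Prop) (eqv le : α → α → Prop) : Prop :=
  (∀ a, P a → le a a) ∧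
  (∀ a b c, P a → P b → P c → le a b → le b c → le a c) ∧
  (∀ a b, P a → P b → le a b → le b a → eqv a b)

/-- `le` is a partial order on `{a | P a}`. -/
def IsPartialOrderOn {α : Type*} (P : α → Prop) (le : α → α → Prop) : Prop :=
  IsPartialOrderOnMod P (· = ·) le

/-- `a'` covers `a` in `{a | P a}` ordered by `le`, modulo `eqv`. -/
def CoversOnMod {α : Type*} (P : α → Prop) (eqv le : α → α → Prop) (a a' : α) : Prop :=
  P a ∧ P a' ∧ le a a' ∧ ¬ eqv a a' ∧
    ∀ c, P c → le a c → le c a' → (eqv c a ∨ eqv c a')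

/-- `ρ` is a rank on `{a | P a}` ordered by `le`, modulo `eqv`:  along every
covering relation it increases by exactly `1`. -/
def IsRankOnMod {α : Type*} (P : α → Prop) (eqv le : α → α → Prop) (ρ : α → ℕ) : Prop :=
  ∀ a a', CoversOnMod P eqv le a a' → ρ a' = ρ a + 1

/-- `a'` covers `a` in `{a | P a}` ordered by `le`. -/
def CoversOn {α : Type*} (P : α → Prop) (le : α → α → Prop) : α → α → Prop :=
  CoversOnMod P (· = ·) le

/-- `ρ` is a rank on `{a | P a}` ordered by `le`. -/
def IsRankOn {α : Type*} (P : α → Prop) (le : α → α → Prop) (ρ : α → ℕ) : Prop :=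
  IsRankOnMod P (· = ·) le ρ

/-- `f` is a quotient of posets from `({a | P a}, lea)` onto `({b | Q b}, leb)`:
an order-preserving surjection such that any relation downstairs lifts to a
relation upstairs. -/
def IsPosetQuotient {α β : Type*} (P : α → Prop) (Q : β → Prop)
    (lea : α → α → Prop) (leb : β → β → Prop) (f : α → β) : Prop :=
  (∀ a, P a → Q (f a)) ∧
  (∀ a a', P a → P a' → lea a a' → leb (f a) (f a')) ∧
  (∀ b, Q b → ∃ a, P a ∧ f a = b) ∧
  (∀ b b', Q b → Q b' → leb b b' →
    ∃ a a', P a ∧ P a' ∧ f a = b ∧ f a' = b' ∧ lea a a')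

/-! ### Structures over the moduli of stable graphs -/

/-- Pairs `(G, S)` with `G` stable of genus `g` and `S ∈ A^b_G`. -/
noncomputable def PairStab (g b : ℕ) (p : WGraph × Finset ℕ) : Prop :=
  p.1.Stable g ∧ p.1.Ab b p.2

/-- Isomorphism of pairs `(G, S)`. -/
def PairIso (p q : WGraph × Finset ℕ) : Prop :=
  ∃ fV fE, p.1.IsoMaps q.1 fV fE ∧ p.2.image fE = q.2

/-- The order on `A^b_g`: `(G,S) ≤ (H,T)` iff there is a contraction
`γ : G → H` (a contraction of `G` followed by an isomorphism onto `H`) with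
`γ* T ⊆ S`. -/
noncomputable def AgLE (b : ℕ) (p q : WGraph × Finset ℕ) : Prop :=
  ∃ S₀ ⊆ p.1.E, ∃ fV fE, (p.1.contract S₀).IsoMaps q.1 fV fE ∧
    p.1.pullStar b (((p.1.contract S₀).E).filter fun e => fE e ∈ q.2) ⊆ p.2

/-- Triples `(G, S, O̅_S)` with `G` stable of genus `g`, `S ∈ A^b_G` and
`O_S ∈ 𝒪^b(G−S)` (representing elements of `𝒪̄𝒫^b_g`). -/
noncomputable def TripP (g b : ℕ) (x : WGraph × Finset ℕ × Orient) : Prop :=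
  x.1.Stable g ∧ x.1.Ab b x.2.1 ∧ x.1.MemOb x.2.1 b x.2.2

/-- Identification of triples: an isomorphism of the underlying graphs
carrying the subgraph and the class of the orientation (i.e. its divisor) of
one to the other. -/
noncomputable def TripEq (b : ℕ) (x y : WGraph × Finset ℕ × Orient) : Prop :=
  ∃ fV fE, x.1.IsoMaps y.1 fV fE ∧ x.2.1.image fE = y.2.1 ∧
    ∀ v ∈ x.1.V, y.1.divOr y.2.1 b y.2.2 (fV v) = x.1.divOr x.2.1 b x.2.2 v

/-- The order on `𝒪̄𝒫^b_g`: `(G, O̅_S) ≤ (H, O̅_T)` iff there is a contraction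
`γ : G → H` with `γ* T ⊆ S` and `γ̄_* O̅_S ≤ O̅_T`, the latter meaning that the
restriction of `O̅_T` to `H − γ_* S` equals `γ̄_* O̅_S` (compared through the
isomorphism, via the divisors). -/
noncomputable def OPgLE (b : ℕ) (x y : WGraph × Finset ℕ × Orient) : Prop :=
  ∃ S₀ ⊆ x.1.E, ∃ fV fE, (x.1.contract S₀).IsoMaps y.1 fV fE ∧
    x.1.pullStar b (((x.1.contract S₀).E).filter fun e => fE e ∈ y.2.1) ⊆ x.2.1 ∧
    ∃ O', x.1.equivOr x.2.1 b O' x.2.2 ∧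
      ((∀ e ∈ S₀, O' e ≠ some EdgeDir.bi) ∨ x.1.E \ (S₀ ∪ x.2.1) = ∅) ∧
      ∀ v ∈ (x.1.contract S₀).V,
        y.1.divOr ((x.2.1 \ S₀).image fE) b
            (restr y.2.2 (y.1.E \ (x.2.1 \ S₀).image fE)) (fV v)
          = (x.1.contract S₀).divOr (x.2.1 \ S₀) b
              (restr O' (x.1.E \ (S₀ ∪ x.2.1))) v

/-!
Contracting `S` and then `T` is contracting `S ∪ T`, and contractions are transported along
isomorphisms; this gives transitivity, and antisymmetry follows from
`|E(G/S)| = |E(G)| - |S|`. Contraction preserves connectivity and genus, and a vertex of weight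
`0` of `G/S` comes from a fibre of genus `0` with at least three half-edges leaving it, so
contractions of stable graphs are stable. Hence if `H` covers `G`, contracting one edge of `G`
already yields `H`, so `|E(H)| = |E(G)| - 1`; as `|E(G)| ≤ 3g - 3` (count degrees), the rank
`3g - 3 - |E|` goes up by exactly one.
-/

namespace Relation

variable {α β : Type*} {r : α → α → Prop} {s : β → β → Prop} {f : α → β}

theorem EqvGen.map (hr : ∀ a b, r a b → EqvGen s (f a) (f b)) {a b : α} (h : EqvGen r a b) :
    EqvGen s (f a) (f b) := by
  induction h with
  | rel a b h => exact hr a b h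
  | refl a => exact .refl _
  | symm a b _ ih => exact .symm _ _ ih
  | trans a b c _ _ ih₁ ih₂ => exact .trans _ _ _ ih₁ ih₂

theorem EqvGen.of_map {D : Set α}
    (hs : ∀ x y, s x y → ∃ a ∈ D, ∃ b ∈ D, f a = x ∧ f b = y ∧ r a b)
    (hfib : ∀ a ∈ D, ∀ b ∈ D, f a = f b → EqvGen r a b)
    {a b : α} (ha : a ∈ D) (hb : b ∈ D) (h : EqvGen s (f a) (f b)) : EqvGen r a b := by
  suffices key : ∀ x y, EqvGen s x y → (x ∈ f '' D ↔ y ∈ f '' D) ∧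
      ∀ a ∈ D, ∀ b ∈ D, f a = x → f b = y → EqvGen r a b from
    (key _ _ h).2 a ha b hb rfl rfl
  intro x y hxy
  induction hxy with
  | rel x y hxy =>
    obtain ⟨a', ha', b', hb', rfl, rfl, hr⟩ := hs x y hxy
    refine ⟨iff_of_true ⟨a', ha', rfl⟩ ⟨b', hb', rfl⟩, fun a ha b hb hfa hfb => ?_⟩
    exact (hfib a ha a' ha' hfa).trans _ _ _
      ((EqvGen.rel _ _ hr).trans _ _ _ (hfib b' hb' b hb hfb.symm))
  | refl x => exact ⟨Iff.rfl, fun a ha b hb hfa hfb => hfib a ha b hb (hfa.trans hfb.symm)⟩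
  | symm x y _ ih =>
    exact ⟨ih.1.symm, fun a ha b hb hfa hfb => .symm _ _ (ih.2 b hb a ha hfb hfa)⟩
  | trans x y z _ _ ih₁ ih₂ =>
    refine ⟨ih₁.1.trans ih₂.1, fun a ha c hc hfa hfc => ?_⟩
    obtain ⟨b, hb, hfb⟩ := ih₁.1.1 ⟨a, ha, hfa⟩
    exact (ih₁.2 a ha b hb hfa hfb).trans _ _ _ (ih₂.2 b hb c hc hfb hfc)

theorem natCard_quot_eq_of_surjective (hf : Function.Surjective f)
    (hr : ∀ a b, r a b → EqvGen s (f a) (f b))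
    (hs : ∀ x y, s x y → ∃ a b, f a = x ∧ f b = y ∧ r a b)
    (hfib : ∀ a b, f a = f b → EqvGen r a b) :
    Nat.card (Quot r) = Nat.card (Quot s) := by
  refine Nat.card_eq_of_bijective
    (Quot.lift (fun a => Quot.mk s (f a)) fun a b h => Quot.eqvGen_sound (hr a b h)) ⟨?_, ?_⟩
  · rintro ⟨a⟩ ⟨b⟩ hab
    refine Quot.eqvGen_sound (EqvGen.of_map (D := Set.univ) ?_ ?_ trivial trivial
      (Quot.eqvGen_exact hab))
    · intro x y hxy
      obtain ⟨a, b, hfa, hfb, h⟩ := hs x y hxy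
      exact ⟨a, trivial, b, trivial, hfa, hfb, h⟩
    · exact fun a _ b _ => hfib a b
  · rintro ⟨y⟩
    obtain ⟨a, rfl⟩ := hf y
    exact ⟨Quot.mk r a, rfl⟩

theorem natCard_quot_le_of_le [Finite α] {r' : α → α → Prop}
    (h : ∀ a b, r a b → r' a b) :
    Nat.card (Quot r') ≤ Nat.card (Quot r) :=
  Nat.card_le_card_of_surjective (Quot.lift (Quot.mk r') fun a b hab => Quot.sound (h a b hab))
    (by rintro ⟨a⟩; exact ⟨Quot.mk r a, rfl⟩)

theorem natCard_quot_le_succ [Finite α] {r' : α → α → Prop} (p q : α)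
    (h : ∀ a b, r' a b → r a b ∨ (a = p ∧ b = q) ∨ (a = q ∧ b = p)) :
    Nat.card (Quot r) ≤ Nat.card (Quot r') + 1 := by
  -- Merging the class of `q` into that of `p` is constant on `r'`-steps.
  let c : Quot r → Quot r := fun x => if x = Quot.mk r q then Quot.mk r p else x
  have hc : ∀ a b, r' a b → c (Quot.mk r a) = c (Quot.mk r b) := by
    intro a b hab
    rcases h a b hab with hab | ⟨rfl, rfl⟩ | ⟨rfl, rfl⟩
    · rw [Quot.sound hab]
    · simp [c]
    · simp [c]
  let lift : Option (Quot r') → Quot r :=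
    fun o => o.elim (Quot.mk r q) (Quot.lift (fun a => c (Quot.mk r a)) hc)
  have hlift : Function.Surjective lift := by
    rintro ⟨a⟩
    by_cases ha : Quot.mk r a = Quot.mk r q
    · exact ⟨none, ha.symm⟩
    · exact ⟨some (Quot.mk r' a), if_neg ha⟩
  simpa using Nat.card_le_card_of_surjective lift hlift

end Relation

namespace WGraph

open Relation

variable {G H K : WGraph} {F S T W A : Finset ℕ} {u v x e g : ℕ} {fV fE : ℕ → ℕ}

/-! ### Fibres of a contraction and connected components -/

theorem adjOn_comm : G.adjOn F u v ↔ G.adjOn F v u := by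
  simp only [adjOn, or_comm]

instance : Std.Symm (G.adjOn F) := ⟨fun _ _ => adjOn_comm.1⟩

theorem mem_V_of_adjOn (h : G.adjOn F u v) : u ∈ G.V ∧ v ∈ G.V := by
  obtain ⟨e, he, h | h⟩ := h <;> have hV := G.ends_mem e (mem_inter.1 he).2 <;> rw [h] at hV
  exacts [hV, hV.symm]

theorem adjOn_mono {F' : Finset ℕ} (h : F ⊆ F') : G.adjOn F u v → G.adjOn F' u v :=
  fun ⟨e, he, hends⟩ => ⟨e, inter_subset_inter_right h he, hends⟩

theorem adjOn_inter_E : G.adjOn (F ∩ G.E) = G.adjOn F := by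
  ext u v
  simp only [adjOn, inter_assoc, inter_self]

theorem adjOn_of_mem {e : ℕ} (he : e ∈ F) (heE : e ∈ G.E) :
    G.adjOn F (G.ends e).1 (G.ends e).2 :=
  ⟨e, mem_inter.2 ⟨he, heE⟩, Or.inl rfl⟩

theorem not_adjOn_empty : ¬ G.adjOn ∅ u v := by
  simp [adjOn]

theorem mem_V_iff_of_eqvGen (h : EqvGen (G.adjOn F) u v) : u ∈ G.V ↔ v ∈ G.V := by
  induction h with
  | rel u v h => exact iff_of_true (mem_V_of_adjOn h).1 (mem_V_of_adjOn h).2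
  | refl => rfl
  | symm _ _ _ ih => exact ih.symm
  | trans _ _ _ _ _ ih₁ ih₂ => exact ih₁.trans ih₂

theorem eqvGen_crep : EqvGen (G.adjOn S) (G.crep S v) v :=
  Nat.sInf_mem (⟨v, .refl v⟩ : {u | EqvGen (G.conRel S) u v}.Nonempty)

theorem crep_eq_crep_iff : G.crep S u = G.crep S v ↔ EqvGen (G.adjOn S) u v := by
  refine ⟨fun h => .trans _ _ _ (.symm _ _ eqvGen_crep) (h ▸ eqvGen_crep), fun h => ?_⟩
  unfold crep
  congr 1
  ext z
  exact ⟨fun hz => hz.trans _ _ _ h, fun hz => hz.trans _ _ _ (.symm _ _ h)⟩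

theorem crep_crep : G.crep S (G.crep S v) = G.crep S v :=
  crep_eq_crep_iff.2 eqvGen_crep

theorem crep_eq_of_adjOn (h : G.adjOn S u v) : G.crep S u = G.crep S v :=
  crep_eq_crep_iff.2 (.rel _ _ h)

theorem crep_eq_crep_union (h : G.crep S u = G.crep S v) :
    G.crep (S ∪ T) u = G.crep (S ∪ T) v :=
  crep_eq_crep_iff.2 <|
    EqvGen.mono (fun _ _ => adjOn_mono subset_union_left) _ _ (crep_eq_crep_iff.1 h)

theorem crep_mem_V (hv : v ∈ G.V) : G.crep S v ∈ G.V :=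
  (mem_V_iff_of_eqvGen eqvGen_crep).2 hv

theorem crep_empty : G.crep ∅ v = v :=
  EqvGen.eqvGen_le (r' := Eq) (fun _ _ h => absurd h not_adjOn_empty) _ _ eqvGen_crep

theorem mem_indEdges : e ∈ G.indEdges S W ↔
    e ∈ G.E ∧ e ∉ S ∧ (G.ends e).1 ∈ W ∧ (G.ends e).2 ∈ W := by
  simp [indEdges, and_assoc]

theorem mem_indEdges_sdiff : e ∈ G.indEdges (G.E \ S) W ↔
    e ∈ G.E ∧ e ∈ S ∧ (G.ends e).1 ∈ W ∧ (G.ends e).2 ∈ W := by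
  simp +contextual [mem_indEdges]

theorem indEdges_subset_E : G.indEdges S W ⊆ G.E := fun _ he => (mem_indEdges.1 he).1

@[simp] theorem contract_V : (G.contract S).V = G.V.image (G.crep S) := rfl
@[simp] theorem contract_E : (G.contract S).E = G.E \ S := rfl
@[simp] theorem contract_ends :
    (G.contract S).ends e = (G.crep S (G.ends e).1, G.crep S (G.ends e).2) := rfl

variable (G) in
noncomputable def fib (S : Finset ℕ) (x : ℕ) : Finset ℕ := G.V.filter fun u => G.crep S u = x

theorem mem_fib : u ∈ G.fib S x ↔ u ∈ G.V ∧ G.crep S u = x := mem_filter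

theorem mem_fib_self (hx : x ∈ (G.contract S).V) : x ∈ G.fib S x := by
  obtain ⟨u, hu, rfl⟩ := mem_image.1 hx
  exact mem_fib.2 ⟨crep_mem_V hu, crep_crep⟩

variable (G) in
def compRel (W F : Finset ℕ) (a b : {x // x ∈ W}) : Prop := G.adjOn F a b

theorem ncomp_eq_natCard : G.ncomp W F = Nat.card (Quot (G.compRel W F)) := rfl

variable (G) in
def Saturated (S A : Finset ℕ) : Prop :=
  A ⊆ G.V ∧ ∀ u ∈ G.V, ∀ v ∈ A, G.crep S u = G.crep S v → u ∈ A

theorem saturated_V : G.Saturated S G.V := ⟨Subset.rfl, fun _ hu _ _ _ => hu⟩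

theorem saturated_fib : G.Saturated S (G.fib S x) :=
  ⟨filter_subset _ _, fun _ hu _ hv h => mem_fib.2 ⟨hu, h.trans (mem_fib.1 hv).2⟩⟩

theorem saturated_fib_union : G.Saturated S (G.fib (S ∪ T) x) :=
  ⟨filter_subset _ _, fun _ hu _ hv h =>
    mem_fib.2 ⟨hu, (crep_eq_crep_union h).trans (mem_fib.1 hv).2⟩⟩

theorem Saturated.quot_mk_eq {S' : Finset ℕ} (hA : G.Saturated S A) (hS : S ⊆ S') {a b : ℕ}
    (ha : a ∈ A) (hb : b ∈ A) (h : G.crep S a = G.crep S b) :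
    Quot.mk (G.compRel A (G.indEdges (G.E \ S') A)) ⟨a, ha⟩ = Quot.mk _ ⟨b, hb⟩ := by
  have hpath : ReflTransGen (G.adjOn S) a b := by
    rw [← EqvGen.eqvGen_eq_reflTransGen]
    exact crep_eq_crep_iff.1 h
  suffices ∀ c, ReflTransGen (G.adjOn S) a c →
      ∃ hc : c ∈ A,
        Quot.mk (G.compRel A (G.indEdges (G.E \ S') A)) ⟨a, ha⟩ = Quot.mk _ ⟨c, hc⟩
    from (this b hpath).2
  intro c hc
  induction hc with
  | refl => exact ⟨ha, rfl⟩
  | @tail c d _ hcd ih =>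
    obtain ⟨hc, ih⟩ := ih
    have hd : d ∈ A := hA.2 d (mem_V_of_adjOn hcd).2 c hc (crep_eq_of_adjOn hcd).symm
    refine ⟨hd, ih.trans (Quot.sound ?_)⟩
    obtain ⟨e, he, hends⟩ := hcd
    obtain ⟨heS, heE⟩ := mem_inter.1 he
    have hendsA : (G.ends e).1 ∈ A ∧ (G.ends e).2 ∈ A := by
      rcases hends with h | h <;> rw [h] <;> exact ⟨‹_›, ‹_›⟩
    exact ⟨e, mem_inter.2 ⟨mem_indEdges_sdiff.2 ⟨heE, hS heS, hendsA⟩, heE⟩, hends⟩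

theorem ncomp_fib (hx : x ∈ (G.contract S).V) :
    G.ncomp (G.fib S x) (G.indEdges (G.E \ S) (G.fib S x)) = 1 := by
  rw [ncomp_eq_natCard, Nat.card_eq_one_iff_unique]
  refine ⟨⟨?_⟩, ⟨Quot.mk _ ⟨x, mem_fib_self hx⟩⟩⟩
  rintro ⟨⟨a, ha⟩⟩ ⟨⟨b, hb⟩⟩
  exact saturated_fib.quot_mk_eq Subset.rfl ha hb ((mem_fib.1 ha).2.trans (mem_fib.1 hb).2.symm)

theorem adjOn_insert : G.adjOn (insert e F) u v ↔
    G.adjOn F u v ∨ e ∈ G.E ∧ (G.ends e = (u, v) ∨ G.ends e = (v, u)) := by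
  simp only [adjOn, mem_insert, mem_inter]
  constructor
  · rintro ⟨f, ⟨rfl | hf, hfE⟩, h⟩
    exacts [Or.inr ⟨hfE, h⟩, Or.inl ⟨f, ⟨hf, hfE⟩, h⟩]
  · rintro (⟨f, ⟨hf, hfE⟩, h⟩ | ⟨he, h⟩)
    exacts [⟨f, ⟨Or.inr hf, hfE⟩, h⟩, ⟨e, ⟨Or.inl rfl, he⟩, h⟩]

theorem ncomp_le_ncomp_insert_add_one : G.ncomp W F ≤ G.ncomp W (insert e F) + 1 := by
  rw [ncomp_eq_natCard, ncomp_eq_natCard]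
  by_cases hends : (G.ends e).1 ∈ W ∧ (G.ends e).2 ∈ W
  · refine natCard_quot_le_succ ⟨_, hends.1⟩ ⟨_, hends.2⟩ fun a b hab => ?_
    rcases adjOn_insert.1 hab with hab | ⟨-, h | h⟩
    · exact Or.inl hab
    · exact Or.inr (Or.inl ⟨Subtype.ext (by simp [h]), Subtype.ext (by simp [h])⟩)
    · exact Or.inr (Or.inr ⟨Subtype.ext (by simp [h]), Subtype.ext (by simp [h])⟩)
  · refine (natCard_quot_le_of_le fun a b hab => ?_).trans (Nat.le_succ _)
    rcases adjOn_insert.1 hab with hab | ⟨-, h | h⟩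
    · exact hab
    · exact absurd (by simp [h, a.2, b.2]) hends
    · exact absurd (by simp [h, a.2, b.2]) hends

theorem card_le_card_add_ncomp : W.card ≤ F.card + G.ncomp W F := by
  induction F using Finset.induction_on with
  | empty =>
    have hinj : Function.Injective (Quot.mk (G.compRel W ∅)) := fun a b hab =>
      EqvGen.eqvGen_le (r' := Eq) (fun _ _ h => absurd h not_adjOn_empty) _ _
        (Quot.eqvGen_exact hab)
    simpa [ncomp_eq_natCard] using Nat.card_le_card_of_injective _ hinj
  | insert e F he ih =>
    rw [card_insert_of_notMem he]
    have := ncomp_le_ncomp_insert_add_one (G := G) (W := W) (F := F) (e := e)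
    omega

theorem subGenus_nonneg : 0 ≤ G.subGenus W F := by
  have h := card_le_card_add_ncomp (G := G) (W := W) (F := F ∩ G.E)
  have hc : G.ncomp W (F ∩ G.E) = G.ncomp W F := by simp only [ncomp, adjOn_inter_E]
  have hw : 0 ≤ ∑ v ∈ W, (G.w v : ℤ) := sum_nonneg fun _ _ => Int.natCast_nonneg _
  unfold subGenus
  omega

/-! ### Contraction preserves genus, connectivity and stability -/

theorem contract_w : (G.contract S).w x =
    (G.subGenus (G.fib S x) (G.indEdges (G.E \ S) (G.fib S x))).toNat := rfl

theorem contract_w_eq (hx : x ∈ (G.contract S).V) : ((G.contract S).w x : ℤ) =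
    ∑ u ∈ G.fib S x, (G.w u : ℤ) - (G.fib S x).card +
      (G.indEdges (G.E \ S) (G.fib S x)).card + 1 := by
  rw [contract_w, Int.toNat_of_nonneg subGenus_nonneg, subGenus, ncomp_fib hx,
    inter_eq_left.2 indEdges_subset_E, Nat.cast_one]

theorem mem_indEdges_contract : e ∈ (G.contract S).indEdges ((G.contract S).E \ T) W ↔
    e ∈ G.E ∧ e ∉ S ∧ e ∈ T ∧
      G.crep S (G.ends e).1 ∈ W ∧ G.crep S (G.ends e).2 ∈ W := by
  rw [mem_indEdges_sdiff]
  simp [and_assoc]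

theorem Saturated.crep_mem_image_iff (hA : G.Saturated S A) (hu : u ∈ G.V) :
    G.crep S u ∈ A.image (G.crep S) ↔ u ∈ A := by
  refine ⟨fun h => ?_, mem_image_of_mem _⟩
  obtain ⟨a, ha, hau⟩ := mem_image.1 h
  exact hA.2 u hu a ha hau.symm

theorem Saturated.fib_eq (hA : G.Saturated S A) (hx : x ∈ A.image (G.crep S)) :
    G.fib S x = A.filter (G.crep S · = x) := by
  obtain ⟨a, ha, rfl⟩ := mem_image.1 hx
  ext u
  simp only [mem_fib, mem_filter]
  exact ⟨fun ⟨hu, h⟩ => ⟨hA.2 u hu a ha h, h⟩, fun ⟨hu, h⟩ => ⟨hA.1 hu, h⟩⟩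

theorem Saturated.ncomp_contract (hA : G.Saturated S A) :
    (G.contract S).ncomp (A.image (G.crep S))
        ((G.contract S).indEdges ((G.contract S).E \ T) (A.image (G.crep S))) =
      G.ncomp A (G.indEdges (G.E \ (S ∪ T)) A) := by
  have hends : ∀ e ∈ G.E, (G.ends e).1 ∈ A ∧ (G.ends e).2 ∈ A ↔
      G.crep S (G.ends e).1 ∈ A.image (G.crep S) ∧
        G.crep S (G.ends e).2 ∈ A.image (G.crep S) :=
    fun e he => by
      rw [hA.crep_mem_image_iff (G.ends_mem e he).1, hA.crep_mem_image_iff (G.ends_mem e he).2]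
  symm
  refine natCard_quot_eq_of_surjective (f := fun a => ⟨G.crep S a, mem_image_of_mem _ a.2⟩)
    ?_ ?_ ?_ ?_
  · rintro ⟨y, hy⟩
    obtain ⟨a, ha, rfl⟩ := mem_image.1 hy
    exact ⟨⟨a, ha⟩, rfl⟩
  · rintro a b ⟨e, he, hab⟩
    obtain ⟨heA, heE⟩ := mem_inter.1 he
    obtain ⟨-, heST, hA⟩ := mem_indEdges_sdiff.1 heA
    by_cases heS : e ∈ S
    · convert EqvGen.refl _ using 2
      exact (crep_eq_of_adjOn ⟨e, mem_inter.2 ⟨heS, heE⟩, hab⟩).symm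
    · have heT := (mem_union.1 heST).resolve_left heS
      refine .rel _ _ ⟨e, mem_inter.2 ⟨mem_indEdges_contract.2
        ⟨heE, heS, heT, (hends e heE).1 hA⟩, mem_sdiff.2 ⟨heE, heS⟩⟩, ?_⟩
      rcases hab with h | h <;> simp [h]
  · rintro x y ⟨e, he, hxy⟩
    obtain ⟨heE, heS, heT, hB⟩ := mem_indEdges_contract.1 (mem_inter.1 he).1
    obtain ⟨h₁, h₂⟩ := (hends e heE).2 hB
    have hadj : G.compRel A (G.indEdges (G.E \ (S ∪ T)) A) ⟨_, h₁⟩ ⟨_, h₂⟩ :=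
      adjOn_of_mem (mem_indEdges_sdiff.2 ⟨heE, mem_union_right _ heT, h₁, h₂⟩) heE
    rcases hxy with h | h <;> simp only [contract_ends, Prod.mk.injEq] at h
    · exact ⟨_, _, Subtype.ext h.1, Subtype.ext h.2, hadj⟩
    · exact ⟨_, _, Subtype.ext h.2, Subtype.ext h.1, adjOn_comm.1 hadj⟩
  · rintro ⟨a, ha⟩ ⟨b, hb⟩ hab
    exact Quot.eqvGen_exact (hA.quot_mk_eq subset_union_left ha hb (congrArg Subtype.val hab))

theorem Saturated.indEdges_fib (hA : G.Saturated S A) (hx : x ∈ A.image (G.crep S)) :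
    G.indEdges (G.E \ S) (G.fib S x) =
      (G.indEdges (G.E \ S) A).filter fun e => G.crep S (G.ends e).1 = x := by
  ext e
  simp only [mem_filter, mem_indEdges_sdiff, hA.fib_eq hx]
  constructor
  · rintro ⟨heE, heS, ⟨h₁, hx₁⟩, h₂, -⟩
    exact ⟨⟨heE, heS, h₁, h₂⟩, hx₁⟩
  · rintro ⟨⟨heE, heS, h₁, h₂⟩, hx₁⟩
    exact ⟨heE, heS, ⟨h₁, hx₁⟩, h₂,
      (crep_eq_of_adjOn (adjOn_of_mem heS heE)).symm.trans hx₁⟩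

theorem Saturated.sum_contract_w (hA : G.Saturated S A) :
    ∑ x ∈ A.image (G.crep S), ((G.contract S).w x : ℤ) =
      ∑ u ∈ A, (G.w u : ℤ) - A.card + (G.indEdges (G.E \ S) A).card +
        (A.image (G.crep S)).card := by
  calc ∑ x ∈ A.image (G.crep S), ((G.contract S).w x : ℤ)
      = ∑ x ∈ A.image (G.crep S), ((∑ u ∈ A with G.crep S u = x, ((G.w u : ℤ) - 1)) +
          ∑ e ∈ G.indEdges (G.E \ S) A with G.crep S (G.ends e).1 = x, (1 : ℤ) + 1) := by
        refine sum_congr rfl fun x hx => ?_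
        rw [contract_w_eq (image_subset_image hA.1 hx), hA.indEdges_fib hx, hA.fib_eq hx,
          sum_sub_distrib]
        simp
    _ = _ := by
        rw [sum_add_distrib, sum_add_distrib,
          sum_fiberwise_of_maps_to (fun _ => mem_image_of_mem _),
          sum_fiberwise_of_maps_to fun e he => mem_image_of_mem _ (mem_indEdges.1 he).2.2.1]
        simp [sum_sub_distrib]

theorem card_indEdges_union :
    (G.indEdges (G.E \ (S ∪ T)) A).card = (G.indEdges (G.E \ S) A).card +
      ((G.indEdges (G.E \ (S ∪ T)) A).filter (· ∉ S)).card := by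
  rw [← card_filter_add_card_filter_not (· ∈ S)]
  congr 2
  ext e
  simp only [mem_filter, mem_indEdges_sdiff, mem_union]
  tauto

theorem Saturated.indEdges_contract (hA : G.Saturated S A) :
    (G.contract S).indEdges ((G.contract S).E \ T) (A.image (G.crep S)) =
      (G.indEdges (G.E \ (S ∪ T)) A).filter (· ∉ S) := by
  ext e
  rw [mem_indEdges_contract]
  simp only [mem_filter, mem_indEdges_sdiff, mem_union]
  constructor
  · rintro ⟨heE, heS, heT, h₁, h₂⟩
    exact ⟨⟨heE, Or.inr heT, (hA.crep_mem_image_iff (G.ends_mem e heE).1).1 h₁,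
      (hA.crep_mem_image_iff (G.ends_mem e heE).2).1 h₂⟩, heS⟩
  · rintro ⟨⟨heE, heST, h₁, h₂⟩, heS⟩
    exact ⟨heE, heS, heST.resolve_left heS, mem_image_of_mem _ h₁, mem_image_of_mem _ h₂⟩

/-- Each fibre of `G → G/S` is connected, so its genus is the weight of its image. -/
theorem Saturated.subGenus_contract (hA : G.Saturated S A) :
    (G.contract S).subGenus (A.image (G.crep S))
        ((G.contract S).indEdges ((G.contract S).E \ T) (A.image (G.crep S))) =
      G.subGenus A (G.indEdges (G.E \ (S ∪ T)) A) := by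
  unfold subGenus
  rw [inter_eq_left.2 indEdges_subset_E, inter_eq_left.2 indEdges_subset_E, hA.sum_contract_w,
    hA.ncomp_contract, card_indEdges_union, hA.indEdges_contract]
  push_cast
  ring

theorem indEdges_sdiff_V (h : G.E ⊆ S) : G.indEdges (G.E \ S) G.V = G.E := by
  ext e
  simp +contextual [mem_indEdges_sdiff, G.ends_mem, h _]

theorem E_subset_union_sdiff : G.E ⊆ S ∪ (G.E \ S) := fun e he => by
  by_cases e ∈ S <;> simp [*]

theorem genus_contract : (G.contract S).genus = G.genus :=
  calc (G.contract S).genus = (G.contract S).subGenus (G.contract S).V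
        ((G.contract S).indEdges ((G.contract S).E \ (G.E \ S)) (G.contract S).V) := by
        rw [indEdges_sdiff_V (G := G.contract S) (S := G.E \ S) Subset.rfl]; rfl
    _ = G.subGenus G.V (G.indEdges (G.E \ (S ∪ (G.E \ S))) G.V) :=
        saturated_V.subGenus_contract
    _ = G.genus := by rw [indEdges_sdiff_V E_subset_union_sdiff]; rfl

theorem connected_contract (hG : G.Connected) : (G.contract S).Connected :=
  calc (G.contract S).ncomp (G.contract S).V (G.contract S).E
      = (G.contract S).ncomp (G.contract S).V
        ((G.contract S).indEdges ((G.contract S).E \ (G.E \ S)) (G.contract S).V) := by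
        rw [indEdges_sdiff_V (G := G.contract S) (S := G.E \ S) Subset.rfl]
    _ = G.ncomp G.V (G.indEdges (G.E \ (S ∪ (G.E \ S))) G.V) := saturated_V.ncomp_contract
    _ = 1 := by rw [indEdges_sdiff_V E_subset_union_sdiff]; exact hG

theorem sum_deg : ∑ u ∈ W, G.deg u = ∑ e ∈ G.E,
    ((if (G.ends e).1 ∈ W then 1 else 0) + (if (G.ends e).2 ∈ W then 1 else 0)) := by
  unfold deg
  rw [sum_comm]
  exact sum_congr rfl fun e _ => by rw [sum_add_distrib, sum_ite_eq, sum_ite_eq]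

theorem sum_deg_V : ∑ v ∈ G.V, G.deg v = 2 * G.E.card := by
  rw [sum_deg, card_eq_sum_ones, mul_sum]
  exact sum_congr rfl fun e he => by simp [G.ends_mem e he]

theorem deg_contract : (G.contract S).deg x + 2 * (G.indEdges (G.E \ S) (G.fib S x)).card =
    ∑ u ∈ G.fib S x, G.deg u := by
  have hfib : ∀ e ∈ G.E, ((G.ends e).1 ∈ G.fib S x ↔ G.crep S (G.ends e).1 = x) ∧
      ((G.ends e).2 ∈ G.fib S x ↔ G.crep S (G.ends e).2 = x) := fun e he =>
    ⟨by simp [mem_fib, (G.ends_mem e he).1], by simp [mem_fib, (G.ends_mem e he).2]⟩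
  rw [sum_deg, ← sum_filter_add_sum_filter_not G.E (· ∈ S), add_comm]
  congr 1
  · rw [card_eq_sum_ones, mul_sum, indEdges, sdiff_sdiff_right_self, inf_eq_inter, sum_filter,
      filter_mem_eq_inter]
    refine sum_congr rfl fun e he => ?_
    obtain ⟨heE, heS⟩ := mem_inter.1 he
    simp only [(hfib e heE).1, (hfib e heE).2, crep_eq_of_adjOn (adjOn_of_mem heS heE), and_self]
    split_ifs <;> rfl
  · unfold deg
    rw [contract_E, sdiff_eq_filter]
    refine sum_congr rfl fun e he => ?_
    simp only [(hfib e (mem_filter.1 he).1).1, (hfib e (mem_filter.1 he).1).2, contract_ends]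
    congr

theorem three_mul_card_le (hdeg : ∀ v ∈ G.V, G.w v = 0 → 3 ≤ G.deg v) (hW : W ⊆ G.V) :
    3 * W.card ≤ ∑ v ∈ W, G.deg v + 3 * ∑ v ∈ W, G.w v := by
  rw [card_eq_sum_ones, mul_sum, mul_sum, ← sum_add_distrib]
  refine sum_le_sum fun v hv => ?_
  by_cases h0 : G.w v = 0
  · have := hdeg v (hW hv) h0
    omega
  · omega

/-- A vertex of weight `0` in `G/S` is the image of a fibre of genus `0`, whose degree sum
exceeds twice its number of inner edges by at least `3`. -/
theorem stable_contract (hG : G.Stable g) : (G.contract S).Stable g := by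
  obtain ⟨hconn, hgenus, hdeg⟩ := hG
  refine ⟨connected_contract hconn, genus_contract.trans hgenus, fun x hx hw => ?_⟩
  have hwx := contract_w_eq hx
  have h3 := three_mul_card_le (W := G.fib S x) hdeg (filter_subset _ _)
  have hd := deg_contract (G := G) (S := S) (x := x)
  rw [hw, ← Nat.cast_sum] at hwx
  omega

theorem card_E_add_three_le (hG : G.Stable g) : G.E.card + 3 ≤ 3 * g := by
  obtain ⟨hconn, hgenus, hdeg⟩ := hG
  have h3 := three_mul_card_le hdeg Subset.rfl
  have hsum := sum_deg_V (G := G)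
  unfold genus subGenus at hgenus
  rw [hconn, inter_self, ← Nat.cast_sum] at hgenus
  omega

/-! ### Isomorphisms -/

theorem isoMaps_id (G : WGraph) : G.IsoMaps G id id :=
  ⟨Set.bijOn_id _, Set.bijOn_id _, fun _ _ => Or.inl rfl, fun _ _ => rfl⟩

theorem iso_refl (G : WGraph) : G.Iso G := ⟨id, id, isoMaps_id G⟩

theorem IsoMaps.comp {gV gE : ℕ → ℕ} (h₁ : G.IsoMaps H fV fE) (h₂ : H.IsoMaps K gV gE) :
    G.IsoMaps K (gV ∘ fV) (gE ∘ fE) := by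
  refine ⟨h₂.1.comp h₁.1, h₂.2.1.comp h₁.2.1, fun e he => ?_, fun v hv => ?_⟩
  · rcases h₁.2.2.1 e he with h | h <;>
      rcases h₂.2.2.1 (fE e) (h₁.2.1.mapsTo he) with h' | h' <;> simp [h, h']
  · simp [h₂.2.2.2 (fV v) (h₁.1.mapsTo hv), h₁.2.2.2 v hv]

theorem Iso.trans (h₁ : G.Iso H) (h₂ : H.Iso K) : G.Iso K :=
  let ⟨_, _, h₁⟩ := h₁
  let ⟨_, _, h₂⟩ := h₂
  ⟨_, _, h₁.comp h₂⟩

theorem Iso.symm (h : G.Iso H) : H.Iso G := by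
  obtain ⟨fV, fE, hV, hE, hends, hw⟩ := h
  have hVinv := hV.invOn_invFunOn
  have hEinv := hE.invOn_invFunOn
  refine ⟨Function.invFunOn fV G.V, Function.invFunOn fE G.E, hV.symm hVinv.symm,
    hE.symm hEinv.symm, fun e he => ?_, fun v hv => ?_⟩
  · have he' := (hE.symm hEinv.symm).mapsTo he
    have hVe := G.ends_mem _ he'
    rcases hends _ he' with h | h <;> rw [hEinv.2 he] at h <;>
      simp [h, hVinv.1 hVe.1, hVinv.1 hVe.2]
  · rw [← hw _ ((hV.symm hVinv.symm).mapsTo hv), hVinv.2 hv]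

theorem Iso.card_E (h : G.Iso H) : G.E.card = H.E.card := by
  obtain ⟨-, fE, -, hE, -⟩ := h
  exact card_nbij fE hE.mapsTo hE.injOn hE.surjOn

theorem IsoMaps.ends_eq_iff (h : G.IsoMaps H fV fE) (he : e ∈ G.E) (hu : u ∈ G.V)
    (hv : v ∈ G.V) :
    (H.ends (fE e) = (fV u, fV v) ∨ H.ends (fE e) = (fV v, fV u)) ↔
      (G.ends e = (u, v) ∨ G.ends e = (v, u)) := by
  obtain ⟨h₁, h₂⟩ := G.ends_mem e he
  have hinj := h.1.injOn
  rcases h.2.2.1 e he with hH | hH <;>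
    simp only [hH, Prod.ext_iff, hinj.eq_iff h₁ hu, hinj.eq_iff h₁ hv, hinj.eq_iff h₂ hu,
      hinj.eq_iff h₂ hv]
  tauto

theorem IsoMaps.adjOn_image_iff (h : G.IsoMaps H fV fE) (hF : F ⊆ G.E) (hu : u ∈ G.V)
    (hv : v ∈ G.V) : H.adjOn (F.image fE) (fV u) (fV v) ↔ G.adjOn F u v := by
  constructor
  · rintro ⟨e', he', hends⟩
    obtain ⟨e, heF, rfl⟩ := mem_image.1 (mem_inter.1 he').1
    exact ⟨e, mem_inter.2 ⟨heF, hF heF⟩, (h.ends_eq_iff (hF heF) hu hv).1 hends⟩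
  · rintro ⟨e, he, hends⟩
    obtain ⟨heF, heE⟩ := mem_inter.1 he
    exact ⟨fE e, mem_inter.2 ⟨mem_image_of_mem _ heF, h.2.1.mapsTo heE⟩,
      (h.ends_eq_iff heE hu hv).2 hends⟩

theorem IsoMaps.mem_image_iff (h : G.IsoMaps H fV fE) (hW : W ⊆ G.V) (hu : u ∈ G.V) :
    fV u ∈ W.image fV ↔ u ∈ W := by
  rw [← mem_coe, coe_image, h.1.injOn.mem_image_iff (coe_subset.2 hW) hu, mem_coe]

theorem IsoMaps.ncomp_image (h : G.IsoMaps H fV fE) (hW : W ⊆ G.V) (hF : F ⊆ G.E) :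
    H.ncomp (W.image fV) (F.image fE) = G.ncomp W F := by
  symm
  refine natCard_quot_eq_of_surjective (f := fun a => ⟨fV a, mem_image_of_mem _ a.2⟩)
    ?_ ?_ ?_ ?_
  · rintro ⟨y, hy⟩
    obtain ⟨a, ha, rfl⟩ := mem_image.1 hy
    exact ⟨⟨a, ha⟩, rfl⟩
  · exact fun a b hab => .rel _ _ ((h.adjOn_image_iff hF (hW a.2) (hW b.2)).2 hab)
  · rintro ⟨x, hx⟩ ⟨y, hy⟩ hxy
    obtain ⟨a, ha, rfl⟩ := mem_image.1 hx
    obtain ⟨b, hb, rfl⟩ := mem_image.1 hy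
    exact ⟨⟨a, ha⟩, ⟨b, hb⟩, rfl, rfl, (h.adjOn_image_iff hF (hW ha) (hW hb)).1 hxy⟩
  · intro a b hab
    rw [Subtype.ext (h.1.injOn (hW a.2) (hW b.2) (congrArg Subtype.val hab))]
    exact .refl _

theorem IsoMaps.subGenus_image (h : G.IsoMaps H fV fE) (hW : W ⊆ G.V) (hF : F ⊆ G.E) :
    H.subGenus (W.image fV) (F.image fE) = G.subGenus W F := by
  have hFH : F.image fE ⊆ H.E := fun _ he' => by
    obtain ⟨e, he, rfl⟩ := mem_image.1 he'
    exact h.2.1.mapsTo (hF he)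
  unfold subGenus
  rw [sum_image fun _ hu _ hv => h.1.injOn (hW hu) (hW hv),
    card_image_of_injOn fun _ hu _ hv => h.1.injOn (hW hu) (hW hv), inter_eq_left.2 hF,
    inter_eq_left.2 hFH, card_image_of_injOn fun _ he _ he' => h.2.1.injOn (hF he) (hF he'),
    h.ncomp_image hW hF, sum_congr rfl fun v hv => congrArg _ (h.2.2.2 v (hW hv))]

theorem IsoMaps.indEdges_image (h : G.IsoMaps H fV fE) (hW : W ⊆ G.V) (hF : F ⊆ G.E) :
    H.indEdges (H.E \ F.image fE) (W.image fV) = (G.indEdges (G.E \ F) W).image fE := by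
  have hends : ∀ e ∈ G.E,
      ((H.ends (fE e)).1 ∈ W.image fV ∧ (H.ends (fE e)).2 ∈ W.image fV ↔
        (G.ends e).1 ∈ W ∧ (G.ends e).2 ∈ W) := fun e he => by
    obtain ⟨h₁, h₂⟩ := G.ends_mem e he
    rcases h.2.2.1 e he with hH | hH <;>
      simp only [hH, h.mem_image_iff hW h₁, h.mem_image_iff hW h₂, and_comm]
  ext e'
  rw [mem_indEdges_sdiff]
  constructor
  · rintro ⟨-, he'F, hW'⟩
    obtain ⟨e, heF, rfl⟩ := mem_image.1 he'F
    exact mem_image_of_mem _ (mem_indEdges_sdiff.2 ⟨hF heF, heF, (hends e (hF heF)).1 hW'⟩)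
  · intro he'
    obtain ⟨e, he, rfl⟩ := mem_image.1 he'
    obtain ⟨heE, heF, hW'⟩ := mem_indEdges_sdiff.1 he
    exact ⟨h.2.1.mapsTo heE, mem_image_of_mem _ heF, (hends e heE).2 hW'⟩

theorem IsoMaps.crep_eq_iff (h : G.IsoMaps H fV fE) (hT : T ⊆ G.E) (hu : u ∈ G.V)
    (hv : v ∈ G.V) :
    H.crep (T.image fE) (fV u) = H.crep (T.image fE) (fV v) ↔ G.crep T u = G.crep T v := by
  rw [crep_eq_crep_iff, crep_eq_crep_iff]
  constructor
  · refine EqvGen.of_map (D := G.V) (fun x y hxy => ?_) (fun a ha b hb hab => ?_) hu hv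
    · obtain ⟨hx, hy⟩ := mem_V_of_adjOn hxy
      obtain ⟨a, ha, rfl⟩ := h.1.surjOn hx
      obtain ⟨b, hb, rfl⟩ := h.1.surjOn hy
      exact ⟨a, ha, b, hb, rfl, rfl, (h.adjOn_image_iff hT ha hb).1 hxy⟩
    · rw [h.1.injOn ha hb hab]
      exact .refl _
  · refine EqvGen.map fun a b hab => .rel _ _ ?_
    obtain ⟨ha, hb⟩ := mem_V_of_adjOn hab
    exact (h.adjOn_image_iff hT ha hb).2 hab

theorem IsoMaps.fib_image (h : G.IsoMaps H fV fE) (hT : T ⊆ G.E) (hx : x ∈ G.V)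
    (hxx : G.crep T x = x) :
    H.fib (T.image fE) (H.crep (T.image fE) (fV x)) = (G.fib T x).image fV := by
  ext y
  simp only [mem_fib, mem_image]
  constructor
  · rintro ⟨hy, hyx⟩
    obtain ⟨u, hu, rfl⟩ := h.1.surjOn hy
    exact ⟨u, ⟨hu, ((h.crep_eq_iff hT hu hx).1 hyx).trans hxx⟩, rfl⟩
  · rintro ⟨u, ⟨hu, hux⟩, rfl⟩
    exact ⟨h.1.mapsTo hu, (h.crep_eq_iff hT hu hx).2 (hux.trans hxx.symm)⟩

/-! ### The contraction order -/

theorem isoMaps_contract_of_crep_eq_iff {T₁ T₂ : Finset ℕ} {φ ψ : ℕ → ℕ}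
    (hφ : Set.MapsTo φ G.V H.V) (hφ' : Set.SurjOn φ G.V H.V)
    (hcrep : ∀ u ∈ G.V, ∀ v ∈ G.V,
      H.crep T₂ (φ u) = H.crep T₂ (φ v) ↔ G.crep T₁ u = G.crep T₁ v)
    (hψ : Set.BijOn ψ ↑(G.E \ T₁) ↑(H.E \ T₂))
    (hends : ∀ e ∈ G.E \ T₁, H.ends (ψ e) = (φ (G.ends e).1, φ (G.ends e).2) ∨
      H.ends (ψ e) = (φ (G.ends e).2, φ (G.ends e).1))
    (hw : ∀ x ∈ (G.contract T₁).V,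
      (H.contract T₂).w (H.crep T₂ (φ x)) = (G.contract T₁).w x) :
    (G.contract T₁).IsoMaps (H.contract T₂) (fun x => H.crep T₂ (φ x)) ψ := by
  have hcc : ∀ u ∈ G.V, H.crep T₂ (φ (G.crep T₁ u)) = H.crep T₂ (φ u) :=
    fun u hu => (hcrep _ (crep_mem_V hu) u hu).2 crep_crep
  refine ⟨⟨?_, ?_, ?_⟩, hψ, fun e he => ?_, hw⟩
  · rintro _ hx
    obtain ⟨u, hu, rfl⟩ := mem_image.1 hx
    exact mem_image_of_mem _ (hφ (crep_mem_V hu))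
  · rintro _ hx _ hy hxy
    obtain ⟨u, hu, rfl⟩ := mem_image.1 hx
    obtain ⟨v, hv, rfl⟩ := mem_image.1 hy
    simp only [hcc u hu, hcc v hv] at hxy
    exact (hcrep u hu v hv).1 hxy
  · rintro _ hy
    obtain ⟨_, hz, rfl⟩ := mem_image.1 hy
    obtain ⟨u, hu, rfl⟩ := hφ' hz
    exact ⟨G.crep T₁ u, mem_image_of_mem _ hu, hcc u hu⟩
  · obtain ⟨h₁, h₂⟩ := G.ends_mem e (mem_sdiff.1 he).1
    rcases hends e he with h | h <;> simp [h, hcc _ h₁, hcc _ h₂]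

theorem crep_contract_eq_iff :
    (G.contract S).crep T (G.crep S u) = (G.contract S).crep T (G.crep S v) ↔
      G.crep (S ∪ T) u = G.crep (S ∪ T) v := by
  rw [crep_eq_crep_iff, crep_eq_crep_iff]
  constructor
  · refine EqvGen.of_map (D := Set.univ) (fun x y hxy => ?_) (fun a _ b _ hab => ?_)
      trivial trivial
    · obtain ⟨e, he, hxy⟩ := hxy
      obtain ⟨heT, heE⟩ := mem_inter.1 he
      have hadj := adjOn_of_mem (G := G) (mem_union_right S heT) (mem_sdiff.1 heE).1
      rcases hxy with h | h <;> simp only [contract_ends, Prod.ext_iff] at h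
      · exact ⟨_, trivial, _, trivial, h.1, h.2, hadj⟩
      · exact ⟨_, trivial, _, trivial, h.2, h.1, adjOn_comm.1 hadj⟩
    · exact EqvGen.mono (fun _ _ => adjOn_mono subset_union_left) _ _ (crep_eq_crep_iff.1 hab)
  · refine EqvGen.map fun a b ⟨e, he, hab⟩ => ?_
    obtain ⟨heST, heE⟩ := mem_inter.1 he
    by_cases heS : e ∈ S
    · rw [crep_eq_of_adjOn ⟨e, mem_inter.2 ⟨heS, heE⟩, hab⟩]
      exact .refl _
    · have heT := (mem_union.1 heST).resolve_left heS
      refine .rel _ _ ⟨e, mem_inter.2 ⟨heT, mem_sdiff.2 ⟨heE, heS⟩⟩, ?_⟩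
      rcases hab with h | h <;> simp [h]

theorem fib_contract (hx : G.crep (S ∪ T) x = x) :
    (G.contract S).fib T ((G.contract S).crep T (G.crep S x)) =
      (G.fib (S ∪ T) x).image (G.crep S) := by
  ext y
  simp only [mem_fib, mem_image, contract_V]
  constructor
  · rintro ⟨⟨u, hu, rfl⟩, hux⟩
    exact ⟨u, ⟨hu, (crep_contract_eq_iff.1 hux).trans hx⟩, rfl⟩
  · rintro ⟨u, ⟨hu, hux⟩, rfl⟩
    exact ⟨⟨u, hu, rfl⟩, crep_contract_eq_iff.2 (hux.trans hx.symm)⟩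

theorem contract_contract :
    (G.contract (S ∪ T)).IsoMaps ((G.contract S).contract T)
      (fun x => (G.contract S).crep T (G.crep S x)) id := by
  refine isoMaps_contract_of_crep_eq_iff (fun u hu => mem_image_of_mem _ hu) ?_
    (fun u _ v _ => crep_contract_eq_iff) ?_ (fun e _ => Or.inl rfl) fun x hx => ?_
  · rintro _ hy
    obtain ⟨u, hu, rfl⟩ := mem_image.1 hy
    exact ⟨u, hu, rfl⟩
  · rw [contract_E, sdiff_sdiff_left]
    exact Set.bijOn_id _
  · obtain ⟨u, -, rfl⟩ := mem_image.1 hx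
    rw [contract_w, fib_contract crep_crep, contract_w, saturated_fib_union.subGenus_contract]

theorem IsoMaps.contract (h : G.IsoMaps H fV fE) (hT : T ⊆ G.E) :
    (G.contract T).IsoMaps (H.contract (T.image fE)) (fun x => H.crep (T.image fE) (fV x)) fE := by
  refine isoMaps_contract_of_crep_eq_iff h.1.mapsTo h.1.surjOn
    (fun u hu v hv => h.crep_eq_iff hT hu hv) ⟨?_, ?_, ?_⟩
    (fun e he => h.2.2.1 e (mem_sdiff.1 he).1) fun x hx => ?_
  · intro e he
    obtain ⟨heE, heT⟩ := mem_sdiff.1 he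
    refine mem_sdiff.2 ⟨h.2.1.mapsTo heE, fun hT' => heT ?_⟩
    obtain ⟨t, ht, hte⟩ := mem_image.1 hT'
    rwa [← h.2.1.injOn (hT ht) heE hte]
  · exact h.2.1.injOn.mono fun e he => (mem_sdiff.1 he).1
  · intro e' he'
    obtain ⟨he'E, he'T⟩ := mem_sdiff.1 he'
    obtain ⟨e, he, rfl⟩ := h.2.1.surjOn he'E
    exact ⟨e, mem_sdiff.2 ⟨he, fun heT => he'T (mem_image_of_mem _ heT)⟩, rfl⟩
  · obtain ⟨u, hu, rfl⟩ := mem_image.1 hx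
    have hfib : G.fib T (G.crep T u) ⊆ G.V := filter_subset _ _
    rw [contract_w, h.fib_image hT (crep_mem_V hu) crep_crep, h.indEdges_image hfib hT,
      h.subGenus_image hfib indEdges_subset_E, contract_w]

theorem contract_empty : (G.contract ∅).IsoMaps G id id := by
  have hcrep : G.crep ∅ = id := funext fun _ => crep_empty
  have hV : (G.contract ∅).V = G.V := by simp [hcrep]
  refine ⟨by rw [hV]; exact Set.bijOn_id _, by simp [Set.bijOn_id], fun e _ => by simp [hcrep],
    fun v hv => ?_⟩
  have hfib : G.fib ∅ v = {v} := by
    ext u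
    simp only [mem_fib, hcrep, id, mem_singleton]
    exact ⟨And.right, fun h => ⟨h ▸ hV ▸ hv, h⟩⟩
  have h := contract_w_eq hv
  simp only [hfib, sdiff_empty, indEdges, sdiff_self, bot_eq_empty, filter_empty, sum_singleton,
    card_singleton, card_empty] at h
  simp only [id]
  omega

theorem iso_contract_empty : G.Iso (G.contract ∅) :=
  Iso.symm ⟨_, _, contract_empty⟩

theorem Iso.contractLE (h : G.Iso H) : G.contractLE H :=
  ⟨∅, empty_subset _, iso_contract_empty.symm.trans h⟩

theorem contractLE_refl (G : WGraph) : G.contractLE G :=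
  (iso_refl G).contractLE

theorem contractLE_contract (hS : S ⊆ G.E) : G.contractLE (G.contract S) :=
  ⟨S, hS, iso_refl _⟩

theorem contract_contractLE_contract (hS : S ⊆ G.E) (hTS : T ⊆ S) :
    (G.contract T).contractLE (G.contract S) := by
  refine ⟨S \ T, sdiff_subset_sdiff hS Subset.rfl, Iso.symm ?_⟩
  have h := contract_contract (G := G) (S := T) (T := S \ T)
  rw [union_sdiff_of_subset hTS] at h
  exact ⟨_, _, h⟩

theorem IsoMaps.image_filter (h : G.IsoMaps H fV fE) (hT : T ⊆ H.E) :
    (G.E.filter (fE · ∈ T)).image fE = T := by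
  ext e'
  simp only [mem_image, mem_filter]
  constructor
  · rintro ⟨e, ⟨-, he⟩, rfl⟩
    exact he
  · intro he'
    obtain ⟨e, he, rfl⟩ := h.2.1.surjOn (hT he')
    exact ⟨e, ⟨he, he'⟩, rfl⟩

theorem contractLE_trans (h₁ : G.contractLE H) (h₂ : H.contractLE K) : G.contractLE K := by
  obtain ⟨S, hS, fV, fE, hGH⟩ := h₁
  obtain ⟨T', hT', hHK⟩ := h₂
  set T := (G.contract S).E.filter (fE · ∈ T')
  have hT : T ⊆ (G.contract S).E := filter_subset _ _
  have h₁ : (G.contract (S ∪ T)).Iso ((G.contract S).contract T) :=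
    ⟨_, _, contract_contract⟩
  have h₂ : ((G.contract S).contract T).Iso (H.contract T') := by
    rw [← hGH.image_filter hT']
    exact ⟨_, _, hGH.contract hT⟩
  exact ⟨S ∪ T, union_subset hS (hT.trans sdiff_subset), h₁.trans (h₂.trans hHK)⟩

theorem card_E_contract (hS : S ⊆ G.E) : (G.contract S).E.card + S.card = G.E.card :=
  card_sdiff_add_card_eq_card hS

theorem contractLE_antisymm (h₁ : G.contractLE H) (h₂ : H.contractLE G) : G.Iso H := by
  obtain ⟨S, hS, hGH⟩ := h₁
  obtain ⟨T, hT, hHG⟩ := h₂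
  have hGH' := card_E_contract hS
  have hHG' := card_E_contract hT
  rw [hGH.card_E] at hGH'
  rw [hHG.card_E] at hHG'
  obtain rfl : S = ∅ := card_eq_zero.1 (by omega)
  exact iso_contract_empty.trans hGH

/-- Contracting a single edge `e ∈ S` gives a stable graph between `G` and `G/S ≅ H`; it has
fewer edges than `G`, so it is `H`. -/
theorem card_E_add_one_of_covers
    (h : CoversOnMod (fun G : WGraph => G.Stable g) Iso contractLE G H) :
    H.E.card + 1 = G.E.card := by
  obtain ⟨hG, -, ⟨S, hS, hGH⟩, hne, hmax⟩ := h
  obtain ⟨e, he⟩ : S.Nonempty := by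
    rw [nonempty_iff_ne_empty]
    rintro rfl
    exact hne (iso_contract_empty.trans hGH)
  have heS : {e} ⊆ S := singleton_subset_iff.2 he
  have hcard := card_E_contract (heS.trans hS)
  rw [card_singleton] at hcard
  rcases hmax _ (stable_contract hG) (contractLE_contract (heS.trans hS))
      (contractLE_trans (contract_contractLE_contract hS heS) hGH.contractLE) with h | h
  · have := h.card_E
    omega
  · have := h.card_E
    omega

end WGraph

theorem Sg_graded_poset_general (g : ℕ) :
    IsPartialOrderOnMod (fun G : WGraph => G.Stable g) WGraph.Iso WGraph.contractLE ∧
    IsRankOnMod (fun G : WGraph => G.Stable g) WGraph.Iso WGraph.contractLE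
      (fun G => 3 * g - 3 - G.E.card) := by
  refine ⟨⟨fun G _ => WGraph.contractLE_refl G, fun _ _ _ _ _ _ => WGraph.contractLE_trans,
    fun _ _ _ _ => WGraph.contractLE_antisymm⟩, fun G H hcov => ?_⟩
  have hcard := WGraph.card_E_add_one_of_covers hcov
  have hbound := WGraph.card_E_add_three_le hcov.1
  show 3 * g - 3 - H.E.card = 3 * g - 3 - G.E.card + 1
  omega

/-- For `g ≥ 2`, the set `S_g` of stable graphs of genus `g`
(up to isomorphism), partially ordered by edge-contraction, is a graded poset
with rank `G ↦ 3g − 3 − |E(G)|`. -/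
theorem Sg_graded_poset (g : ℕ) (hg : 2 ≤ g) :
    IsPartialOrderOnMod (fun G : WGraph => G.Stable g) WGraph.Iso WGraph.contractLE ∧
    IsRankOnMod (fun G : WGraph => G.Stable g) WGraph.Iso WGraph.contractLE
      (fun G => 3 * g - 3 - G.E.card) :=
  Sg_graded_poset_general g
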